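/- arXiv:1903.01283 — 4 statements merged into one kernel-verified Lean document; each statement's English description precedes it below -/
import Mathlib

section
/- Gain identity for the unbiased minimum variance Kalman filter: Let P ∈ ℝ^{n×n}, H ∈ ℝ^{p×n}, R ∈ ℝ^{p×p}, B ∈ ℝ^{n×m} with full column rank, meaning BᵀB is invertible. Suppose C := H P Hᵀ + R is invertible and S := Bᵀ Hᵀ C⁻¹ H B is invertible. Define the gain L := P Hᵀ C⁻¹ + (B − P Hᵀ C⁻¹ H B) S⁻¹ Bᵀ Hᵀ C⁻¹. Then L H B = B, and consequently B⁺ L H B = I_m, where B⁺ := (BᵀB)⁻¹Bᵀ. -/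
open Matrix

/-- Gain identity for the unbiased minimum variance Kalman filter. -/
theorem kalman_gain_identity {n m p : ℕ}
    (P : Matrix (Fin n) (Fin n) ℝ) (H : Matrix (Fin p) (Fin n) ℝ)
    (R : Matrix (Fin p) (Fin p) ℝ) (B : Matrix (Fin n) (Fin m) ℝ)
    (hB : IsUnit (Bᵀ * B))
    (C : Matrix (Fin p) (Fin p) ℝ) (hC : C = H * P * Hᵀ + R) (hCu : IsUnit C)
    (S : Matrix (Fin m) (Fin m) ℝ) (hS : S = Bᵀ * Hᵀ * C⁻¹ * H * B) (hSu : IsUnit S)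
    (L : Matrix (Fin n) (Fin p) ℝ)
    (hL : L = P * Hᵀ * C⁻¹ + (B - P * Hᵀ * C⁻¹ * H * B) * S⁻¹ * Bᵀ * Hᵀ * C⁻¹) :
    L * H * B = B ∧ ((Bᵀ * B)⁻¹ * Bᵀ) * L * H * B = (1 : Matrix (Fin m) (Fin m) ℝ) := by
  have hSinv : S⁻¹ * S = 1 := Matrix.nonsing_inv_mul S (Matrix.isUnit_iff_isUnit_det S |>.mp hSu)
  have key : L * H * B = B := by
    have : L * H * B = P * Hᵀ * C⁻¹ * H * B +
        (B - P * Hᵀ * C⁻¹ * H * B) * (S⁻¹ * (Bᵀ * Hᵀ * C⁻¹ * H * B)) := by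
      rw [hL]; simp only [Matrix.add_mul, Matrix.sub_mul, Matrix.mul_assoc]
    rw [this, ← hS, hSinv, Matrix.mul_one]
    abel
  refine ⟨key, ?_⟩
  have h2 : (Bᵀ * B)⁻¹ * Bᵀ * L * H * B = (Bᵀ * B)⁻¹ * Bᵀ * (L * (H * B)) := by
    simp only [Matrix.mul_assoc]
  rw [h2, ← Matrix.mul_assoc L H B, key, Matrix.mul_assoc,
    Matrix.nonsing_inv_mul (Bᵀ * B) (Matrix.isUnit_iff_isUnit_det _ |>.mp hB)]
end

section
/- Lower bound on the force estimation accuracy: Under the hypotheses of the mean-squared-error formula — e ∈ ℝ^n, f ∈ ℝ^m, w ∈ ℝ^n, v ∈ ℝ^p square-integrable random vectors with E[e fᵀ] = 0, E[e wᵀ] = 0, E[e vᵀ] = 0, E[f wᵀ] = 0, E[f vᵀ] = 0, E[w vᵀ] = 0 (entrywise, together with transposed identities); M ∈ ℝ^{m×p}, H ∈ ℝ^{p×n}, A ∈ ℝ^{n×n}, B ∈ ℝ^{n×m} with M H B = I_m; f̂ := M[H A e + H B f + H w + v]; Q := E[w wᵀ]; R := E[v vᵀ] — the matrix ε_f² −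 M H Q Hᵀ Mᵀ − M R Mᵀ is positive semidefinite, where ε_f² := E[(f̂ − f)(f̂ − f)ᵀ]. In particular, for every μ ∈ ℝ^m, μᵀ ε_f² μ ≥ μᵀ (M H Q Hᵀ Mᵀ + M R Mᵀ) μ. -/
/-!
Since `M H B = 1`, the force cancels from the error: `f̂ - f = (M H A) e + ((M H) w + M v)`.
Second moments are additive over uncorrelated summands, and the second moment of `C u` is
`C E[u uᵀ] Cᵀ`. Hence `ε_f² = (M H A) E[e eᵀ] (M H A)ᵀ + M H Q Hᵀ Mᵀ + M R Mᵀ`, and the first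
summand, being a second-moment matrix, is positive semidefinite.
-/

open MeasureTheory Matrix

/-- Entrywise outer-product expectation `E[u zᵀ]` of two random vectors. -/
noncomputable def outerExp {Ω : Type*} [MeasurableSpace Ω] (μ : Measure Ω)
    {a b : ℕ} (u : Ω → Fin a → ℝ) (z : Ω → Fin b → ℝ) : Matrix (Fin a) (Fin b) ℝ :=
  Matrix.of fun i j => ∫ ω, u ω i * z ω j ∂μ

open scoped ENNReal

section

variable {Ω : Type*} [MeasurableSpace Ω] {μ : Measure Ω} {a b c : ℕ}

theorem outerExp_transpose (u : Ω → Fin a → ℝ) (z : Ω → Fin b → ℝ) :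
    (outerExp μ u z)ᵀ = outerExp μ z u := by
  ext i j
  simp only [outerExp, transpose_apply, of_apply, mul_comm]

theorem integrable_apply_mul_apply {ι κ : Type*} [Fintype ι] [Fintype κ] {u : Ω → ι → ℝ}
    {z : Ω → κ → ℝ} (hu : MemLp u 2 μ) (hz : MemLp z 2 μ) (i : ι) (j : κ) :
    Integrable (fun ω => u ω i * z ω j) μ :=
  (hu.eval i).integrable_mul (hz.eval j)

theorem MeasureTheory.MemLp.mulVec {ι κ : Type*} [Fintype ι] [Fintype κ] {p : ℝ≥0∞}
    (C : Matrix κ ι ℝ) {u : Ω → ι → ℝ} (hu : MemLp u p μ) :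
    MemLp (fun ω => C *ᵥ u ω) p μ :=
  (LinearMap.toContinuousLinearMap C.mulVecLin).comp_memLp' hu

theorem outerExp_add_left {u u' : Ω → Fin a → ℝ} {z : Ω → Fin b → ℝ}
    (hu : MemLp u 2 μ) (hu' : MemLp u' 2 μ) (hz : MemLp z 2 μ) :
    outerExp μ (fun ω => u ω + u' ω) z = outerExp μ u z + outerExp μ u' z := by
  ext i j
  simp only [outerExp, of_apply, Matrix.add_apply, Pi.add_apply, add_mul]
  exact integral_add (integrable_apply_mul_apply hu hz i j)
    (integrable_apply_mul_apply hu' hz i j)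

theorem outerExp_add_right {u : Ω → Fin a → ℝ} {z z' : Ω → Fin b → ℝ}
    (hu : MemLp u 2 μ) (hz : MemLp z 2 μ) (hz' : MemLp z' 2 μ) :
    outerExp μ u (fun ω => z ω + z' ω) = outerExp μ u z + outerExp μ u z' := by
  rw [← transpose_inj, transpose_add, outerExp_transpose, outerExp_transpose,
    outerExp_transpose, outerExp_add_left hz hz' hu]

theorem outerExp_mulVec_left (C : Matrix (Fin c) (Fin a) ℝ) {u : Ω → Fin a → ℝ}
    {z : Ω → Fin b → ℝ} (hu : MemLp u 2 μ) (hz : MemLp z 2 μ) :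
    outerExp μ (fun ω => C *ᵥ u ω) z = C * outerExp μ u z := by
  ext i j
  simp only [outerExp, of_apply, mul_apply, mulVec, dotProduct, Finset.sum_mul, mul_assoc]
  rw [integral_finsetSum _ fun k _ => (integrable_apply_mul_apply hu hz k j).const_mul _]
  simp only [integral_const_mul]

theorem outerExp_mulVec_right (D : Matrix (Fin c) (Fin b) ℝ) {u : Ω → Fin a → ℝ}
    {z : Ω → Fin b → ℝ} (hu : MemLp u 2 μ) (hz : MemLp z 2 μ) :
    outerExp μ u (fun ω => D *ᵥ z ω) = outerExp μ u z * Dᵀ := by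
  rw [← transpose_inj, outerExp_transpose, outerExp_mulVec_left D hz hu, transpose_mul,
    transpose_transpose, outerExp_transpose]

theorem outerExp_mulVec_mulVec {d : ℕ} (C : Matrix (Fin c) (Fin a) ℝ)
    (D : Matrix (Fin d) (Fin b) ℝ) {u : Ω → Fin a → ℝ} {z : Ω → Fin b → ℝ}
    (hu : MemLp u 2 μ) (hz : MemLp z 2 μ) :
    outerExp μ (fun ω => C *ᵥ u ω) (fun ω => D *ᵥ z ω) = C * outerExp μ u z * Dᵀ := by
  rw [outerExp_mulVec_left C hu (hz.mulVec D), outerExp_mulVec_right D hu hz, Matrix.mul_assoc]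

theorem outerExp_mulVec_mulVec_eq_zero {d : ℕ} {u : Ω → Fin a → ℝ} {z : Ω → Fin b → ℝ}
    (hu : MemLp u 2 μ) (hz : MemLp z 2 μ) (huz : outerExp μ u z = 0)
    (C : Matrix (Fin c) (Fin a) ℝ) (D : Matrix (Fin d) (Fin b) ℝ) :
    outerExp μ (fun ω => C *ᵥ u ω) (fun ω => D *ᵥ z ω) = 0 := by
  rw [outerExp_mulVec_mulVec C D hu hz, huz, Matrix.mul_zero, Matrix.zero_mul]

theorem outerExp_add_add_of_uncorrelated {x y : Ω → Fin a → ℝ} (hx : MemLp x 2 μ)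
    (hy : MemLp y 2 μ) (hxy : outerExp μ x y = 0) (hyx : outerExp μ y x = 0) :
    outerExp μ (fun ω => x ω + y ω) (fun ω => x ω + y ω) = outerExp μ x x + outerExp μ y y := by
  have hsum : MemLp (fun ω => x ω + y ω) 2 μ := hx.add hy
  rw [outerExp_add_left hx hy hsum, outerExp_add_right hx hx hy,
    outerExp_add_right hy hx hy, hxy, hyx, add_zero, zero_add]

theorem dotProduct_outerExp_mulVec {u : Ω → Fin a → ℝ} {z : Ω → Fin b → ℝ}
    (hu : MemLp u 2 μ) (hz : MemLp z 2 μ) (x : Fin a → ℝ) (y : Fin b → ℝ) :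
    x ⬝ᵥ (outerExp μ u z *ᵥ y) = ∫ ω, (x ⬝ᵥ u ω) * (y ⬝ᵥ z ω) ∂μ := by
  -- `x ⬝ᵥ (Q *ᵥ y)` is the only entry of `X * Q * Yᵀ` for the one-row matrices `X`, `Y` of `x`, `y`.
  have := outerExp_mulVec_mulVec (replicateRow (Fin 1) x) (replicateRow (Fin 1) y) hu hz
  rw [dotProduct_mulVec]
  exact (congrFun₂ this 0 0).symm

theorem posSemidef_outerExp_self {g : Ω → Fin a → ℝ} (hg : MemLp g 2 μ) :
    (outerExp μ g g).PosSemidef := by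
  refine posSemidef_iff_dotProduct_mulVec.2 ⟨outerExp_transpose g g, fun x => ?_⟩
  rw [star_trivial, dotProduct_outerExp_mulVec hg hg]
  exact integral_nonneg fun ω => mul_self_nonneg _

end

theorem Matrix.PosSemidef.dotProduct_mulVec_le_of_sub {ι : Type*} [Fintype ι]
    {X Y : Matrix ι ι ℝ} (h : (X - Y).PosSemidef) (x : ι → ℝ) :
    x ⬝ᵥ (Y *ᵥ x) ≤ x ⬝ᵥ (X *ᵥ x) := by
  have := h.dotProduct_mulVec_nonneg x
  rw [star_trivial, sub_mulVec, dotProduct_sub] at this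
  linarith

theorem force_estimation_accuracy_lower_bound_general
    {Ω : Type*} [MeasurableSpace Ω] (μ : Measure Ω)
    {n m p : ℕ}
    (e : Ω → Fin n → ℝ) (f : Ω → Fin m → ℝ) (w : Ω → Fin n → ℝ) (v : Ω → Fin p → ℝ)
    (he : ∀ i, MemLp (fun ω => e ω i) 2 μ)
    (hw : ∀ i, MemLp (fun ω => w ω i) 2 μ)
    (hv : ∀ i, MemLp (fun ω => v ω i) 2 μ)
    (hew : outerExp μ e w = 0)
    (hev : outerExp μ e v = 0)
    (hwv : outerExp μ w v = 0) (hvw : outerExp μ v w = 0)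
    (M : Matrix (Fin m) (Fin p) ℝ) (H : Matrix (Fin p) (Fin n) ℝ)
    (A : Matrix (Fin n) (Fin n) ℝ) (B : Matrix (Fin n) (Fin m) ℝ)
    (hMHB : M * H * B = (1 : Matrix (Fin m) (Fin m) ℝ))
    (fhat : Ω → Fin m → ℝ)
    (hfhat : ∀ ω, fhat ω = M *ᵥ (H *ᵥ (A *ᵥ e ω) + H *ᵥ (B *ᵥ f ω) + H *ᵥ w ω + v ω)) :
    (outerExp μ (fun ω => fhat ω - f ω) (fun ω => fhat ω - f ω)
        - M * H * outerExp μ w w * Hᵀ * Mᵀ - M * outerExp μ v v * Mᵀ).PosSemidef ∧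
      ∀ u : Fin m → ℝ,
        u ⬝ᵥ ((M * H * outerExp μ w w * Hᵀ * Mᵀ + M * outerExp μ v v * Mᵀ) *ᵥ u) ≤
          u ⬝ᵥ (outerExp μ (fun ω => fhat ω - f ω) (fun ω => fhat ω - f ω) *ᵥ u) := by
  replace he := memLp_pi_iff.2 he
  replace hw := memLp_pi_iff.2 hw
  replace hv := memLp_pi_iff.2 hv
  have herr : (fun ω => fhat ω - f ω) =
      fun ω => (M * H * A) *ᵥ e ω + ((M * H) *ᵥ w ω + M *ᵥ v ω) := by
    funext ω
    have hf : (M * H * B) *ᵥ f ω = f ω := by rw [hMHB, one_mulVec]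
    simp only [hfhat, mulVec_add, mulVec_mulVec, ← Matrix.mul_assoc, hf]
    abel
  have hnoise : MemLp (fun ω => (M * H) *ᵥ w ω + M *ᵥ v ω) 2 μ :=
    (hw.mulVec (M * H)).add (hv.mulVec M)
  have hnoise_cov : outerExp μ (fun ω => (M * H) *ᵥ w ω + M *ᵥ v ω)
      (fun ω => (M * H) *ᵥ w ω + M *ᵥ v ω) =
      M * H * outerExp μ w w * Hᵀ * Mᵀ + M * outerExp μ v v * Mᵀ := by
    rw [outerExp_add_add_of_uncorrelated (hw.mulVec (M * H)) (hv.mulVec M)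
      (outerExp_mulVec_mulVec_eq_zero hw hv hwv _ _)
      (outerExp_mulVec_mulVec_eq_zero hv hw hvw _ _), outerExp_mulVec_mulVec _ _ hw hw,
      outerExp_mulVec_mulVec _ _ hv hv, transpose_mul]
    simp only [Matrix.mul_assoc]
  have hcross : outerExp μ (fun ω => (M * H * A) *ᵥ e ω)
      (fun ω => (M * H) *ᵥ w ω + M *ᵥ v ω) = 0 := by
    rw [outerExp_add_right (he.mulVec (M * H * A)) (hw.mulVec (M * H)) (hv.mulVec M),
      outerExp_mulVec_mulVec_eq_zero he hw hew, outerExp_mulVec_mulVec_eq_zero he hv hev,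
      add_zero]
  have hsub : outerExp μ (fun ω => fhat ω - f ω) (fun ω => fhat ω - f ω)
      - M * H * outerExp μ w w * Hᵀ * Mᵀ - M * outerExp μ v v * Mᵀ =
      outerExp μ (fun ω => (M * H * A) *ᵥ e ω) (fun ω => (M * H * A) *ᵥ e ω) := by
    rw [herr, outerExp_add_add_of_uncorrelated (he.mulVec (M * H * A)) hnoise hcross
      (by rw [← outerExp_transpose, hcross, transpose_zero]), hnoise_cov]
    abel
  have hpsd := posSemidef_outerExp_self (he.mulVec (M * H * A))
  rw [← hsub] at hpsd
  refine ⟨hpsd, fun u => ?_⟩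
  rw [sub_sub] at hpsd
  exact hpsd.dotProduct_mulVec_le_of_sub u

/-- Lower bound on the force estimation accuracy. -/
theorem force_estimation_accuracy_lower_bound
    {Ω : Type*} [MeasurableSpace Ω] (μ : Measure Ω) [IsProbabilityMeasure μ]
    {n m p : ℕ}
    (e : Ω → Fin n → ℝ) (f : Ω → Fin m → ℝ) (w : Ω → Fin n → ℝ) (v : Ω → Fin p → ℝ)
    (he : ∀ i, MemLp (fun ω => e ω i) 2 μ)
    (hf : ∀ i, MemLp (fun ω => f ω i) 2 μ)
    (hw : ∀ i, MemLp (fun ω => w ω i) 2 μ)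
    (hv : ∀ i, MemLp (fun ω => v ω i) 2 μ)
    (hef : outerExp μ e f = 0) (hfe : outerExp μ f e = 0)
    (hew : outerExp μ e w = 0) (hwe : outerExp μ w e = 0)
    (hev : outerExp μ e v = 0) (hve : outerExp μ v e = 0)
    (hfw : outerExp μ f w = 0) (hwf : outerExp μ w f = 0)
    (hfv : outerExp μ f v = 0) (hvf : outerExp μ v f = 0)
    (hwv : outerExp μ w v = 0) (hvw : outerExp μ v w = 0)
    (M : Matrix (Fin m) (Fin p) ℝ) (H : Matrix (Fin p) (Fin n) ℝ)
    (A : Matrix (Fin n) (Fin n) ℝ) (B : Matrix (Fin n) (Fin m) ℝ)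
    (hMHB : M * H * B = (1 : Matrix (Fin m) (Fin m) ℝ))
    (fhat : Ω → Fin m → ℝ)
    (hfhat : ∀ ω, fhat ω = M *ᵥ (H *ᵥ (A *ᵥ e ω) + H *ᵥ (B *ᵥ f ω) + H *ᵥ w ω + v ω)) :
    (outerExp μ (fun ω => fhat ω - f ω) (fun ω => fhat ω - f ω)
        - M * H * outerExp μ w w * Hᵀ * Mᵀ - M * outerExp μ v v * Mᵀ).PosSemidef ∧
      ∀ u : Fin m → ℝ,
        u ⬝ᵥ ((M * H * outerExp μ w w * Hᵀ * Mᵀ + M * outerExp μ v v * Mᵀ) *ᵥ u) ≤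
          u ⬝ᵥ (outerExp μ (fun ω => fhat ω - f ω) (fun ω => fhat ω - f ω) *ᵥ u) :=
  force_estimation_accuracy_lower_bound_general μ e f w v he hw hv hew hev hwv hvw M H A B hMHB fhat
    hfhat
end

section
/- Unbiasedness propagation of the unbiased minimum variance filter (one step of Lemma 1): Let x_k, x̂ be integrable ℝ^n-valued random vectors, f an integrable ℝ^m-valued random vector, and w ∈ ℝ^n, v ∈ ℝ^p integrable random vectors with E[w] = 0 and E[v] = 0, on a common probability space. Let A ∈ ℝ^{n×n}, B ∈ ℝ^{n×m}, H ∈ ℝ^{p×n}, and a gain L ∈ ℝ^{n×p} satisfying L H B = B. Set x_{k+1} := A x_k + B f + w, y := H x_{k+1} + v, and x̂⁺ := A x̂ + L(y − H A x̂). If E[x̂] = E[x_k], then E[x̂⁺] = E[x_{k+1}], even though f is unknown to the filter. -/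
open MeasureTheory Matrix

lemma aux_integ_mulVec {Ω : Type*} [MeasurableSpace Ω] (μ : Measure Ω)
    {a b : ℕ} (M : Matrix (Fin a) (Fin b) ℝ) (g : Ω → Fin b → ℝ)
    (hg : ∀ j, Integrable (fun ω => g ω j) μ) (i : Fin a) :
    Integrable (fun ω => (M *ᵥ g ω) i) μ := by
  simp only [mulVec, dotProduct]
  exact integrable_finset_sum _ fun j _ => (hg j).const_mul _

lemma aux_int_mulVec {Ω : Type*} [MeasurableSpace Ω] (μ : Measure Ω)
    {a b : ℕ} (M : Matrix (Fin a) (Fin b) ℝ) (g : Ω → Fin b → ℝ)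
    (hg : ∀ j, Integrable (fun ω => g ω j) μ) (i : Fin a) :
    ∫ ω, (M *ᵥ g ω) i ∂μ = ∑ j, M i j * ∫ ω, g ω j ∂μ := by
  simp only [mulVec, dotProduct]
  rw [integral_finset_sum _ fun j _ => (hg j).const_mul _]
  simp [integral_const_mul]

/-- Unbiasedness propagation of the unbiased minimum variance filter
(one step of Lemma 1). -/
theorem umv_filter_unbiasedness_propagation
    {Ω : Type*} [MeasurableSpace Ω] (μ : Measure Ω) [IsProbabilityMeasure μ]
    {n m p : ℕ}
    (x xhat : Ω → Fin n → ℝ) (f : Ω → Fin m → ℝ)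
    (w : Ω → Fin n → ℝ) (v : Ω → Fin p → ℝ)
    (hx : ∀ i, Integrable (fun ω => x ω i) μ)
    (hxhat : ∀ i, Integrable (fun ω => xhat ω i) μ)
    (hf : ∀ i, Integrable (fun ω => f ω i) μ)
    (hw : ∀ i, Integrable (fun ω => w ω i) μ)
    (hv : ∀ i, Integrable (fun ω => v ω i) μ)
    (hwmean : ∀ i, ∫ ω, w ω i ∂μ = 0)
    (hvmean : ∀ i, ∫ ω, v ω i ∂μ = 0)
    (A : Matrix (Fin n) (Fin n) ℝ) (B : Matrix (Fin n) (Fin m) ℝ)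
    (H : Matrix (Fin p) (Fin n) ℝ) (L : Matrix (Fin n) (Fin p) ℝ)
    (hLHB : L * H * B = B)
    (x' : Ω → Fin n → ℝ) (hdyn : ∀ ω, x' ω = A *ᵥ x ω + B *ᵥ f ω + w ω)
    (y : Ω → Fin p → ℝ) (hy : ∀ ω, y ω = H *ᵥ x' ω + v ω)
    (xhat' : Ω → Fin n → ℝ)
    (hxhat' : ∀ ω, xhat' ω = A *ᵥ xhat ω + L *ᵥ (y ω - H *ᵥ (A *ᵥ xhat ω)))
    (hunb : ∀ i, ∫ ω, xhat ω i ∂μ = ∫ ω, x ω i ∂μ) :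
    ∀ i, ∫ ω, xhat' ω i ∂μ = ∫ ω, x' ω i ∂μ := by
  intro i
  -- rewrite xhat' componentwise as a sum of five mulVec terms
  have hrep : ∀ ω, xhat' ω i =
      ((A - L * H * A) *ᵥ xhat ω) i + ((L * H * A) *ᵥ x ω) i
        + ((L * H * B) *ᵥ f ω) i + ((L * H) *ᵥ w ω) i + (L *ᵥ v ω) i := by
    intro ω
    rw [hxhat' ω, hy ω, hdyn ω]
    simp only [Pi.add_apply, Pi.sub_apply, mulVec_add, mulVec_sub,
      sub_mulVec, ← mulVec_mulVec]
    ring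
  have hrep' : ∀ ω, x' ω i = (A *ᵥ x ω) i + (B *ᵥ f ω) i + w ω i := by
    intro ω; rw [hdyn ω]; simp
  calc ∫ ω, xhat' ω i ∂μ
      = ∫ ω, (((A - L * H * A) *ᵥ xhat ω) i + ((L * H * A) *ᵥ x ω) i
        + ((L * H * B) *ᵥ f ω) i + ((L * H) *ᵥ w ω) i + (L *ᵥ v ω) i) ∂μ := by
        exact integral_congr_ae (Filter.Eventually.of_forall hrep)
    _ = ∫ ω, ((A - L * H * A) *ᵥ xhat ω) i ∂μ + ∫ ω, ((L * H * A) *ᵥ x ω) i ∂μ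
        + ∫ ω, ((L * H * B) *ᵥ f ω) i ∂μ + ∫ ω, ((L * H) *ᵥ w ω) i ∂μ
        + ∫ ω, (L *ᵥ v ω) i ∂μ := by
        rw [integral_add, integral_add, integral_add, integral_add]
        · exact aux_integ_mulVec μ _ _ hxhat i
        · exact aux_integ_mulVec μ _ _ hx i
        · exact ((aux_integ_mulVec μ _ _ hxhat i).add (aux_integ_mulVec μ _ _ hx i))
        · exact aux_integ_mulVec μ _ _ hf i
        · exact (((aux_integ_mulVec μ _ _ hxhat i).add (aux_integ_mulVec μ _ _ hx i)).add
            (aux_integ_mulVec μ _ _ hf i))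
        · exact aux_integ_mulVec μ _ _ hw i
        · exact ((((aux_integ_mulVec μ _ _ hxhat i).add (aux_integ_mulVec μ _ _ hx i)).add
            (aux_integ_mulVec μ _ _ hf i)).add (aux_integ_mulVec μ _ _ hw i))
        · exact aux_integ_mulVec μ _ _ hv i
    _ = ∫ ω, (A *ᵥ x ω) i ∂μ + ∫ ω, (B *ᵥ f ω) i ∂μ + ∫ ω, w ω i ∂μ := by
        rw [aux_int_mulVec μ _ _ hxhat i, aux_int_mulVec μ _ _ hx i,
          aux_int_mulVec μ _ _ hf i, aux_int_mulVec μ _ _ hw i,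
          aux_int_mulVec μ _ _ hv i, aux_int_mulVec μ _ _ hx i,
          aux_int_mulVec μ _ _ hf i]
        simp only [hwmean, hvmean, hunb, mul_zero, Finset.sum_const_zero,
          add_zero, hLHB, Matrix.sub_apply]
        rw [← Finset.sum_add_distrib]
        congr 1
        apply Finset.sum_congr rfl
        intro j _
        ring
    _ = ∫ ω, x' ω i ∂μ := by
        have h1 : ∫ ω, x' ω i ∂μ = ∫ ω, ((A *ᵥ x ω) i + (B *ᵥ f ω) i + w ω i) ∂μ :=
          integral_congr_ae (Filter.Eventually.of_forall hrep')
        rw [h1, integral_add, integral_add]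
        · exact aux_integ_mulVec μ _ _ hx i
        · exact aux_integ_mulVec μ _ _ hf i
        · exact (aux_integ_mulVec μ _ _ hx i).add (aux_integ_mulVec μ _ _ hf i)
        · exact hw i
end

section
/- Error dynamics of the unbiased minimum variance filter: Let A ∈ ℝ^{n×n}, B ∈ ℝ^{n×m}, H ∈ ℝ^{p×n}, and a gain L ∈ ℝ^{n×p} satisfying L H B = B. Let x, x̂ ∈ ℝ^n, f ∈ ℝ^m, w ∈ ℝ^n, v ∈ ℝ^p be vectors, and set x⁺ := A x + B f + w, y := H x⁺ + v, x̂⁺ := A x̂ + L(y − H A x̂), e := x − x̂, and e⁺ := x⁺ − x̂⁺. Then e⁺ = (I_n − L H)(A e + w) − L v; in particular, the estimation error does not depend on the unknown input f. -/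
open Matrix

/-- Error dynamics of the unbiased minimum variance filter: the estimation error
does not depend on the unknown input `f`. -/
theorem umv_filter_error_dynamics {n m p : ℕ}
    (A : Matrix (Fin n) (Fin n) ℝ) (B : Matrix (Fin n) (Fin m) ℝ)
    (H : Matrix (Fin p) (Fin n) ℝ) (L : Matrix (Fin n) (Fin p) ℝ)
    (hLHB : L * H * B = B)
    (x xhat : Fin n → ℝ) (f : Fin m → ℝ) (w : Fin n → ℝ) (v : Fin p → ℝ)
    (x' : Fin n → ℝ) (hx' : x' = A *ᵥ x + B *ᵥ f + w)
    (y : Fin p → ℝ) (hy : y = H *ᵥ x' + v)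
    (xhat' : Fin n → ℝ) (hxhat' : xhat' = A *ᵥ xhat + L *ᵥ (y - H *ᵥ (A *ᵥ xhat)))
    (e : Fin n → ℝ) (he : e = x - xhat)
    (e' : Fin n → ℝ) (he' : e' = x' - xhat') :
    e' = ((1 : Matrix (Fin n) (Fin n) ℝ) - L * H) *ᵥ (A *ᵥ e + w) - L *ᵥ v := by
  have hB : L *ᵥ (H *ᵥ (B *ᵥ f)) = B *ᵥ f := by
    simp only [mulVec_mulVec, ← Matrix.mul_assoc, hLHB]
  subst hx' hy hxhat' he he'
  simp only [mulVec_add, mulVec_sub, sub_mulVec, one_mulVec, ← mulVec_mulVec] at *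
  abel_nf
  rw [hB]
  abel
end
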